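/- Coercivity implies bounded trajectory: Suppose η > 0 satisfies ηβ(3+ηβ) < 1 and f+g is coercive (i.e., (f+g)(u) → +∞ as ‖u‖ → ∞), where f : ℝⁿ → ℝ∪{+∞} is proper convex lsc and g has β-Lipschitz gradient. Let x be the unique C¹ solution of ẋ(t) + x(t) = prox_{ηf}(x(t) − η∇g(x(t))), x(0) = x₀. Then f+g is bounded below and attains its infimum, (f+g)(ẋ(T)+x(T)) ≤ (f+g)(ẋ(0)+x₀) + (1/(2η))‖ẋ(0)‖² for all T ≥ 0, and the trajectory x is bounded on [0,∞). -/

import Mathlib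

open Filter MeasureTheory Set Topology Bornology
open scoped RealInnerProductSpace

/-! The energy `E(t) = (f+g)(ẋ+x) + ‖ẋ‖²/(2η)` is a Lyapunov function. Since the proximal map is
nonexpansive, `ẋ + x` is locally Lipschitz in time, so `E` is absolutely continuous, and its
a.e. derivative `⟪∇g(ẋ+x) - ∇g(x), ẍ+ẋ⟫ - ‖ẋ‖²/η` is nonpositive because `ηβ(3+ηβ) < 1`.
Hence `ẋ + x` stays in a sublevel set of the coercive function `f+g`, i.e. in a ball of
radius `R`, and since `d/dt (eᵗ x) = eᵗ (ẋ + x)`, `‖x‖` never exceeds `max ‖x₀‖ R`. -/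

theorem AbsolutelyContinuousOnInterval.le_of_ae_hasDerivAt_nonpos {h : ℝ → ℝ} {a b : ℝ}
    (hab : a ≤ b) (hh : AbsolutelyContinuousOnInterval h a b)
    (hderiv : ∀ᵐ t ∂volume.restrict (Icc a b), ∃ h', HasDerivAt h h' t ∧ h' ≤ 0) :
    h b ≤ h a := by
  have := intervalIntegral.integral_nonneg_of_ae_restrict hab (f := fun t => -deriv h t)
    (by filter_upwards [hderiv] with t ⟨h', hh', hle⟩; simp [hh'.deriv, hle])
  rw [intervalIntegral.integral_neg, hh.integral_deriv_eq_sub] at this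
  linarith

theorem LocallyLipschitz.absolutelyContinuousOnInterval_comp {X Y : Type*} [PseudoMetricSpace X]
    [PseudoMetricSpace Y] {Φ : X → Y} {γ : ℝ → X} {K : NNReal} {a b : ℝ}
    (hΦ : LocallyLipschitz Φ) (hγ : LipschitzOnWith K γ (uIcc a b)) :
    AbsolutelyContinuousOnInterval (fun t => Φ (γ t)) a b := by
  obtain ⟨L, hL⟩ := hΦ.locallyLipschitzOn.exists_lipschitzOnWith_of_compact
    (isCompact_uIcc.image_of_continuousOn hγ.continuousOn)
  exact (hL.comp hγ (mapsTo_image _ _)).absolutelyContinuousOnInterval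

section NormedSpace

variable {F : Type*} [NormedAddCommGroup F] [NormedSpace ℝ F]

theorem exists_lipschitzOnWith_of_hasDerivAt {x xd : ℝ → F} {a b : ℝ}
    (hx : ∀ t ∈ Icc a b, HasDerivAt x (xd t) t) (hxd : ContinuousOn xd (Icc a b)) :
    ∃ K, LipschitzOnWith K x (Icc a b) := by
  obtain ⟨C, hC⟩ := isCompact_Icc.exists_bound_of_continuousOn hxd
  refine ⟨C.toNNReal, (convex_Icc a b).lipschitzOnWith_of_nnnorm_hasDerivWithin_le
    (fun t ht => (hx t ht).hasDerivWithinAt) fun t ht => ?_⟩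
  rw [← NNReal.coe_le_coe, coe_nnnorm, Real.coe_toNNReal']
  exact (hC t ht).trans (le_max_left _ _)

theorem norm_le_max_of_hasDerivAt_of_norm_add_le {x xd : ℝ → F} {R : ℝ}
    (hx : ∀ t ≥ 0, HasDerivAt x (xd t) t) (hR : ∀ t ≥ 0, ‖xd t + x t‖ ≤ R) {T : ℝ}
    (hT : 0 ≤ T) : ‖x T‖ ≤ max ‖x 0‖ R := by
  set M := max ‖x 0‖ R
  have hy : ∀ t ≥ 0,
      HasDerivAt (fun s => Real.exp s • x s) (Real.exp t • (xd t + x t)) t := fun t ht =>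
    ((Real.hasDerivAt_exp t).smul (hx t ht)).congr_deriv (by rw [smul_add, add_comm])
  have hbound := image_norm_le_of_norm_deriv_right_le_deriv_boundary
    (f := fun s => Real.exp s • x s) (B := fun s => M * Real.exp s) (B' := fun s => M * Real.exp s)
    (fun t ht => (hy t ht.1).continuousAt.continuousWithinAt)
    (fun t ht => (hy t ht.1).hasDerivWithinAt) (by simp [M])
    (fun t => (Real.hasDerivAt_exp t).const_mul M)
    (fun t ht => by
      rw [norm_smul, Real.norm_of_nonneg (Real.exp_pos t).le, mul_comm]
      gcongr
      exact (hR t ht.1).trans (le_max_right _ _))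
    ⟨hT, le_rfl⟩
  rw [norm_smul, Real.norm_of_nonneg (Real.exp_pos T).le, mul_comm] at hbound
  exact le_of_mul_le_mul_right hbound (Real.exp_pos T)

end NormedSpace

section InnerProductSpace

variable {E : Type*} [NormedAddCommGroup E] [InnerProductSpace ℝ E]

def HasSubgradientAt (f : E → ℝ) (w p : E) : Prop :=
  ∀ y, f p + ⟪w, y - p⟫ ≤ f y

theorem HasSubgradientAt.inner_sub_nonneg {f : E → ℝ} {w w' p q : E}
    (hp : HasSubgradientAt f w p) (hq : HasSubgradientAt f w' q) : 0 ≤ ⟪w - w', p - q⟫ := by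
  have h₁ := hp q
  have h₂ := hq p
  rw [← neg_sub p q, inner_neg_right] at h₁
  rw [inner_sub_left]
  linarith

theorem norm_sub_le_of_inner_sub_sub_nonneg {a b p q : E}
    (h : 0 ≤ ⟪(a - p) - (b - q), p - q⟫) : ‖p - q‖ ≤ ‖a - b‖ := by
  have key : ‖p - q‖ * ‖p - q‖ ≤ ‖a - b‖ * ‖p - q‖ := by
    rw [show (a - p) - (b - q) = (a - b) - (p - q) by abel, inner_sub_left,
      real_inner_self_eq_norm_sq] at h
    nlinarith [real_inner_le_norm (a - b) (p - q)]
  rcases (norm_nonneg (p - q)).eq_or_lt with h₀ | h₀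
  · rw [← h₀]
    positivity
  · exact le_of_mul_le_mul_right key h₀

theorem HasSubgradientAt.norm_sub_le_of_smul_sub {f : E → ℝ} {η : ℝ} (hη : 0 < η) {a b p q : E}
    (hp : HasSubgradientAt f (η⁻¹ • (a - p)) p) (hq : HasSubgradientAt f (η⁻¹ • (b - q)) q) :
    ‖p - q‖ ≤ ‖a - b‖ := by
  have h := hp.inner_sub_nonneg hq
  rw [← smul_sub, real_inner_smul_left] at h
  exact norm_sub_le_of_inner_sub_sub_nonneg ((mul_nonneg_iff_of_pos_left (inv_pos.2 hη)).1 h)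

/-- The forward-backward map `a ↦ prox_{ηf}(a - η g'(a))` is `(1 + ηβ)`-Lipschitz; here `d + a` is
its value at `a` (along the trajectory, `a = x` and `d = ẋ`). -/
theorem HasSubgradientAt.norm_add_sub_add_le {f : E → ℝ} {g' : E → E} {β η : ℝ} (hη : 0 < η)
    (hg' : ∀ a b, ‖g' a - g' b‖ ≤ β * ‖a - b‖) {a b d e : E}
    (ha : HasSubgradientAt f (-((1 / η) • d) - g' a) (d + a))
    (hb : HasSubgradientAt f (-((1 / η) • e) - g' b) (e + b)) :
    ‖(d + a) - (e + b)‖ ≤ (1 + η * β) * ‖a - b‖ := by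
  have hstep : ∀ c v : E, -((1 / η) • v) - g' c = η⁻¹ • ((c - η • g' c) - (v + c)) := by
    intro c v
    simp only [smul_sub, smul_add, smul_smul, inv_mul_cancel₀ hη.ne', one_smul, one_div]
    abel
  rw [hstep] at ha hb
  calc ‖(d + a) - (e + b)‖ ≤ ‖(a - η • g' a) - (b - η • g' b)‖ := ha.norm_sub_le_of_smul_sub hη hb
    _ = ‖(a - b) - η • (g' a - g' b)‖ := by rw [smul_sub]; abel_nf
    _ ≤ ‖a - b‖ + η * ‖g' a - g' b‖ := by
        grw [norm_sub_le, norm_smul, Real.norm_of_nonneg hη.le]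
    _ ≤ (1 + η * β) * ‖a - b‖ := by nlinarith [hg' a b]

theorem inner_sub_le_inv_mul_norm_sq {g' : E → E} {β η : ℝ} (hη : 0 < η)
    (hstep : η * β * (3 + η * β) < 1) (hg' : ∀ a b, ‖g' a - g' b‖ ≤ β * ‖a - b‖) {a d v : E}
    (hv : ‖v‖ ≤ (3 + η * β) * ‖d‖) : ⟪g' (d + a) - g' a, v⟫ ≤ η⁻¹ * ‖d‖ ^ 2 := by
  have hlip : ‖g' (d + a) - g' a‖ ≤ β * ‖d‖ := by simpa using hg' (d + a) a
  have hcoeff : β * (3 + η * β) ≤ η⁻¹ := by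
    rw [← one_div, le_div_iff₀ hη]
    linarith
  calc ⟪g' (d + a) - g' a, v⟫ ≤ (β * ‖d‖) * ((3 + η * β) * ‖d‖) := by
        grw [real_inner_le_norm, mul_le_mul hlip hv (norm_nonneg _) ((norm_nonneg _).trans hlip)]
    _ = β * (3 + η * β) * ‖d‖ ^ 2 := by ring
    _ ≤ η⁻¹ * ‖d‖ ^ 2 := by gcongr

theorem contDiff_one_of_hasGradientAt [CompleteSpace E] {g : E → ℝ} {g' : E → E}
    (hg : ∀ z, HasGradientAt g (g' z) z) (hg' : Continuous g') : ContDiff ℝ 1 g :=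
  contDiff_one_iff_hasFDerivAt.2
    ⟨_, (InnerProductSpace.toDual ℝ E).continuous.comp hg', fun z => (hg z).hasFDerivAt⟩

noncomputable def proxGradEnergy (f g : E → ℝ) (η : ℝ) (x xd : ℝ → E) (t : ℝ) : ℝ :=
  f (xd t + x t) + g (xd t + x t) + (1 / (2 * η)) * ‖xd t‖ ^ 2

theorem hasDerivAt_proxGradEnergy [CompleteSpace E] {f g : E → ℝ} {g' : E → E} {η : ℝ}
    {x xd : ℝ → E} {xdd : E} {t : ℝ} (hg : ∀ z, HasGradientAt g (g' z) z)
    (hx : HasDerivAt x (xd t) t) (hxd : HasDerivAt xd xdd t)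
    (hf : HasDerivAt (fun s => f (xd s + x s)) ⟪-((1 / η) • xd t) - g' (x t), xdd + xd t⟫ t) :
    HasDerivAt (proxGradEnergy f g η x xd)
      (⟪g' (xd t + x t) - g' (x t), xdd + xd t⟫ - η⁻¹ * ‖xd t‖ ^ 2) t := by
  have hgu : HasDerivAt (fun s => g (xd s + x s)) ⟪g' (xd t + x t), xdd + xd t⟫ t := by
    have h := (hg _).hasFDerivAt.comp_hasDerivAt t (hxd.add hx)
    rw [InnerProductSpace.toDual_apply_apply] at h
    exact h
  refine ((hf.add hgu).add (hxd.norm_sq.const_mul (1 / (2 * η)))).congr_deriv ?_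
  simp only [inner_sub_left, inner_neg_left, real_inner_smul_left, inner_add_right,
    real_inner_self_eq_norm_sq]
  ring

theorem absolutelyContinuousOnInterval_proxGradEnergy {f g : E → ℝ} {η : ℝ} {x xd : ℝ → E}
    {a b : ℝ} {K K' : NNReal} (hF : LocallyLipschitz fun p => f p + g p)
    (hu : LipschitzOnWith K (fun t => xd t + x t) (uIcc a b))
    (hxd : LipschitzOnWith K' xd (uIcc a b)) :
    AbsolutelyContinuousOnInterval (proxGradEnergy f g η x xd) a b :=
  (hF.absolutelyContinuousOnInterval_comp hu).add
    (((contDiff_norm_sq ℝ).locallyLipschitz.absolutelyContinuousOnInterval_comp hxd).const_mul _)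

theorem proxGradEnergy_antitoneOn [CompleteSpace E] {f g : E → ℝ} {g' : E → E} {β η : ℝ}
    {x xd xdd : ℝ → E} (hη : 0 < η) (hβ : 0 ≤ β) (hstep : η * β * (3 + η * β) < 1)
    (hg : ∀ z, HasGradientAt g (g' z) z) (hg' : ∀ a b, ‖g' a - g' b‖ ≤ β * ‖a - b‖)
    (hF : LocallyLipschitz fun p => f p + g p)
    (hx : ∀ t ≥ (0 : ℝ), HasDerivAt x (xd t) t) (hxd_cont : Continuous xd)
    (hprox : ∀ t ≥ (0 : ℝ), HasSubgradientAt f (-((1 / η) • xd t) - g' (x t)) (xd t + x t))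
    (hxdd : ∀ᵐ t ∂volume.restrict (Ici (0 : ℝ)),
      HasDerivAt xd (xdd t) t ∧ ‖xdd t‖ ≤ (2 + η * β) * ‖xd t‖)
    (hchain : ∀ᵐ t ∂volume.restrict (Ici (0 : ℝ)),
      HasDerivAt (fun s => f (xd s + x s)) ⟪-((1 / η) • xd t) - g' (x t), xdd t + xd t⟫ t) :
    AntitoneOn (proxGradEnergy f g η x xd) (Ici 0) := by
  intro a ha b _ hab
  have hsub : Icc a b ⊆ Ici 0 := fun t ht => le_trans ha ht.1
  obtain ⟨K, hxK⟩ := exists_lipschitzOnWith_of_hasDerivAt (fun t ht => hx t (hsub ht))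
    hxd_cont.continuousOn
  have huK : LipschitzOnWith ((1 + η * β).toNNReal * K) (fun t => xd t + x t) (Icc a b) := by
    refine LipschitzOnWith.of_dist_le_mul fun s hs t ht => ?_
    rw [dist_eq_norm]
    calc ‖(xd s + x s) - (xd t + x t)‖ ≤ (1 + η * β) * dist (x s) (x t) := by
          rw [dist_eq_norm]
          exact (hprox s (hsub hs)).norm_add_sub_add_le hη hg' (hprox t (hsub ht))
      _ ≤ (1 + η * β) * (K * dist s t) := by gcongr; exact hxK.dist_le_mul s hs t ht
      _ = _ := by rw [NNReal.coe_mul, Real.coe_toNNReal _ (by positivity)]; ring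
  have hxdK := huK.sub hxK
  simp only [add_sub_cancel_right] at hxdK
  rw [← uIcc_of_le hab] at huK hxdK
  refine (absolutelyContinuousOnInterval_proxGradEnergy hF huK hxdK).le_of_ae_hasDerivAt_nonpos
    hab ?_
  filter_upwards [ae_restrict_of_ae_restrict_of_subset hsub (hxdd.and hchain),
    ae_restrict_mem measurableSet_Icc] with t ⟨⟨hxd, hxdd_le⟩, hf⟩ ht
  refine ⟨_, hasDerivAt_proxGradEnergy hg (hx t (hsub ht)) hxd hf,
    sub_nonpos.2 (inner_sub_le_inv_mul_norm_sq hη hstep hg' ?_)⟩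
  calc ‖xdd t + xd t‖ ≤ ‖xdd t‖ + ‖xd t‖ := norm_add_le _ _
    _ ≤ (3 + η * β) * ‖xd t‖ := by linarith

end InnerProductSpace

theorem stmt18_general (n : ℕ)
    (f : EuclideanSpace ℝ (Fin n) → ℝ)
    (hf_cvx : ConvexOn ℝ Set.univ f)
    (g : EuclideanSpace ℝ (Fin n) → ℝ) (g' : EuclideanSpace ℝ (Fin n) → EuclideanSpace ℝ (Fin n))
    (hg_diff : ∀ z, HasGradientAt g (g' z) z)
    (β : ℝ) (hβ : 0 ≤ β)
    (hg_lip : ∀ a b, ‖g' a - g' b‖ ≤ β * ‖a - b‖)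
    (hcoercive : Tendsto (fun u => f u + g u) (cobounded (EuclideanSpace ℝ (Fin n))) atTop)
    (η : ℝ) (hη : 0 < η) (hstep : η * β * (3 + η * β) < 1)
    (x xd xdd : ℝ → EuclideanSpace ℝ (Fin n)) (x₀ : EuclideanSpace ℝ (Fin n))
    (hx0 : x 0 = x₀)
    (hx : ∀ t ≥ (0:ℝ), HasDerivAt x (xd t) t) (hxd_cont : Continuous xd)
    (hprox : ∀ t ≥ (0:ℝ), ∀ y,
      f (xd t + x t) + ⟪-((1/η) • xd t) - g' (x t), y - (xd t + x t)⟫ ≤ f y)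
    (hxdd : ∀ᵐ t ∂(volume.restrict (Ici (0:ℝ))),
      HasDerivAt xd (xdd t) t ∧ ‖xdd t‖ ≤ (2 + η * β) * ‖xd t‖)
    (hchain_f : ∀ᵐ t ∂(volume.restrict (Ici (0:ℝ))),
      HasDerivAt (fun s => f (xd s + x s))
        ⟪-((1/η) • xd t) - g' (x t), xdd t + xd t⟫ t) :
    (∃ umin, ∀ u, f umin + g umin ≤ f u + g u) ∧
    (∀ T ≥ (0:ℝ), f (xd T + x T) + g (xd T + x T) ≤
      f (xd 0 + x₀) + g (xd 0 + x₀) + (1/(2*η)) * ‖xd 0‖ ^ 2) ∧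
    ∃ C : ℝ, ∀ t ≥ (0:ℝ), ‖x t‖ ≤ C := by
  have hg'_cont : Continuous g' :=
    (LipschitzWith.of_dist_le' fun a b => by simpa only [dist_eq_norm] using hg_lip a b).continuous
  have hF : LocallyLipschitz fun u => f u + g u :=
    hf_cvx.locallyLipschitz.add (contDiff_one_of_hasGradientAt hg_diff hg'_cont).locallyLipschitz
  set c := f (xd 0 + x₀) + g (xd 0 + x₀) + (1/(2*η)) * ‖xd 0‖ ^ 2
  have henergy : ∀ T ≥ (0:ℝ), f (xd T + x T) + g (xd T + x T) ≤ c := fun T hT => by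
    have hE := proxGradEnergy_antitoneOn hη hβ hstep hg_diff hg_lip hF hx hxd_cont hprox hxdd
      hchain_f (le_refl (0 : ℝ)) hT hT
    simp only [proxGradEnergy, hx0] at hE
    have : 0 ≤ 1 / (2 * η) * ‖xd T‖ ^ 2 := by positivity
    linarith
  refine ⟨hF.continuous.exists_forall_le (by rwa [← Metric.cobounded_eq_cocompact]), henergy, ?_⟩
  have hsublevel : IsBounded {u | f u + g u ≤ c} := isBounded_def.2 <| by
    filter_upwards [hcoercive.eventually_gt_atTop c] with u hu
    simpa using hu
  obtain ⟨R, hR⟩ := isBounded_iff_forall_norm_le.1 hsublevel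
  exact ⟨max ‖x 0‖ R, fun t ht => norm_le_max_of_hasDerivAt_of_norm_add_le hx
    (fun s hs => hR _ (henergy s hs)) ht⟩

/-- Coercivity implies bounded trajectory: if `f+g` is coercive and
`ηβ(3+ηβ) < 1`, then `f+g` is bounded below and attains its infimum, the energy
estimate `(f+g)(ẋ(T)+x(T)) ≤ (f+g)(ẋ(0)+x₀) + (1/(2η))‖ẋ(0)‖²` holds for all
`T ≥ 0`, and the trajectory of `ẋ(t) + x(t) = prox_{ηf}(x(t) − η∇g(x(t)))` is
bounded on `[0,∞)`. -/
theorem stmt18 (n : ℕ)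
    (f : EuclideanSpace ℝ (Fin n) → ℝ)
    (hf_cvx : ConvexOn ℝ Set.univ f) (hf_lsc : LowerSemicontinuous f)
    (g : EuclideanSpace ℝ (Fin n) → ℝ) (g' : EuclideanSpace ℝ (Fin n) → EuclideanSpace ℝ (Fin n))
    (hg_diff : ∀ z, HasGradientAt g (g' z) z)
    (β : ℝ) (hβ : 0 ≤ β)
    (hg_lip : ∀ a b, ‖g' a - g' b‖ ≤ β * ‖a - b‖)
    (hcoercive : Tendsto (fun u => f u + g u) (cobounded (EuclideanSpace ℝ (Fin n))) atTop)
    (η : ℝ) (hη : 0 < η) (hstep : η * β * (3 + η * β) < 1)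
    (x xd xdd : ℝ → EuclideanSpace ℝ (Fin n)) (x₀ : EuclideanSpace ℝ (Fin n))
    (hx0 : x 0 = x₀)
    (hx : ∀ t ≥ (0:ℝ), HasDerivAt x (xd t) t) (hxd_cont : Continuous xd)
    (hprox : ∀ t ≥ (0:ℝ), ∀ y,
      f (xd t + x t) + ⟪-((1/η) • xd t) - g' (x t), y - (xd t + x t)⟫ ≤ f y)
    (hxdd : ∀ᵐ t ∂(volume.restrict (Ici (0:ℝ))),
      HasDerivAt xd (xdd t) t ∧ ‖xdd t‖ ≤ (2 + η * β) * ‖xd t‖)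
    (hchain_f : ∀ᵐ t ∂(volume.restrict (Ici (0:ℝ))),
      HasDerivAt (fun s => f (xd s + x s))
        ⟪-((1/η) • xd t) - g' (x t), xdd t + xd t⟫ t) :
    (∃ umin, ∀ u, f umin + g umin ≤ f u + g u) ∧
    (∀ T ≥ (0:ℝ), f (xd T + x T) + g (xd T + x T) ≤
      f (xd 0 + x₀) + g (xd 0 + x₀) + (1/(2*η)) * ‖xd 0‖ ^ 2) ∧
    ∃ C : ℝ, ∀ t ≥ (0:ℝ), ‖x t‖ ≤ C :=
  stmt18_general n f hf_cvx g g' hg_diff β hβ hg_lip hcoercive η hη hstep x xd xdd x₀ hx0 hx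
    hxd_cont hprox hxdd hchain_f
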